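/- Let St = {γ ∈ ℝ^{p×d} : γᵀγ = I_d}. Let (ε_m)_{m≥1} be a decreasing sequence of positive reals converging to 0, and for each m let γ̂_m ∈ St be a maximizer of V²_{n,ε_m} over St (i.e., V²_{n,ε_m}(γ̂_m) ≥ V²_{n,ε_m}(γ) for all γ ∈ St). Then every limit point γ* of the sequence (γ̂_m) is a maximizer of V_n² over St: γ* ∈ St and V_n²(γ) ≤ V_n²(γ*) for all γ ∈ St. -/

import Mathlib

open Matrix

/-- Euclidean norm of a vector in `ℝ^m`. -/
noncomputable def enorm {m : ℕ} (v : Fin m → ℝ) : ℝ := Real.sqrt (∑ i, v i ^ 2)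

/-- `a_kl(γ) = ‖γᵀ(Z_k − Z_l)‖₂`. -/
noncomputable def akl (n p d : ℕ) (Z : Fin n → Fin p → ℝ)
    (γ : Matrix (Fin p) (Fin d) ℝ) (k l : Fin n) : ℝ :=
  enorm (γᵀ *ᵥ (Z k - Z l))

/-- The objective `V_n²`. -/
noncomputable def Vn (n p d : ℕ) (Z : Fin n → Fin p → ℝ) (B : Fin n → Fin n → ℝ)
    (γ : Matrix (Fin p) (Fin d) ℝ) : ℝ :=
  (1 / (n : ℝ) ^ 2) * ∑ k, ∑ l, akl n p d Z γ k l * B k l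

/-- The perturbed objective `V²_{n,ε}`. -/
noncomputable def Vne (n p d : ℕ) (Z : Fin n → Fin p → ℝ) (B : Fin n → Fin n → ℝ)
    (ε : ℝ) (γ : Matrix (Fin p) (Fin d) ℝ) : ℝ :=
  (1 / (n : ℝ) ^ 2) * ∑ k, ∑ l,
    (akl n p d Z γ k l - ε * Real.log (1 + akl n p d Z γ k l / ε)) * B k l

/-!
Since `log (1 + x) ≤ 2 √x`, the perturbation `ε log (1 + a/ε)` is at most `2 √(ε a)`, so
`V²_{n,ε}(γ) → V_n²(γ₀)` jointly as `ε → 0⁺` and `γ → γ₀`. Passing to the limit along the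
subsequence in the maximality inequalities `V²_{n,ε_m}(γ) ≤ V²_{n,ε_m}(γ̂_m)` gives the claim,
and `γ*` stays on the Stiefel manifold because it is closed.
-/

open Filter Topology

lemma Real.log_one_add_le_two_mul_sqrt {x : ℝ} (hx : 0 ≤ x) :
    Real.log (1 + x) ≤ 2 * √x := by
  have hpos : 0 < 1 + x := by linarith
  have hlog : Real.log √(1 + x) ≤ √(1 + x) - 1 :=
    Real.log_le_sub_one_of_pos (Real.sqrt_pos.mpr hpos)
  rw [Real.log_sqrt hpos.le] at hlog
  have hsqrt : √(1 + x) ≤ 1 + √x := by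
    rw [Real.sqrt_le_left (by positivity)]
    nlinarith [Real.sqrt_nonneg x, Real.sq_sqrt hx]
  linarith

lemma Real.mul_log_one_add_div_le {ε a : ℝ} (hε : 0 < ε) (ha : 0 ≤ a) :
    ε * Real.log (1 + a / ε) ≤ 2 * √ε * √a := by
  calc ε * Real.log (1 + a / ε) ≤ ε * (2 * √(a / ε)) := by
        gcongr
        exact Real.log_one_add_le_two_mul_sqrt (by positivity)
    _ = 2 * √ε * √a := by
        rw [Real.sqrt_div' a hε.le]
        have : √ε ≠ 0 := (Real.sqrt_pos.mpr hε).ne'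
        field_simp
        rw [Real.sq_sqrt hε.le, mul_comm]

lemma Real.tendsto_mul_log_one_add_div {ι : Type*} {l : Filter ι} {ε a : ι → ℝ} {a₀ : ℝ}
    (hε : ∀ i, 0 < ε i) (hε₀ : Tendsto ε l (𝓝 0))
    (ha : ∀ i, 0 ≤ a i) (ha₀ : Tendsto a l (𝓝 a₀)) :
    Tendsto (fun i ↦ ε i * Real.log (1 + a i / ε i)) l (𝓝 0) := by
  refine squeeze_zero
    (fun i ↦ mul_nonneg (hε i).le (Real.log_nonneg ?_))
    (fun i ↦ Real.mul_log_one_add_div_le (hε i) (ha i)) ?_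
  · have := div_nonneg (ha i) (hε i).le
    linarith
  · simpa using (hε₀.sqrt.const_mul 2).mul ha₀.sqrt

section

variable {n p d : ℕ} (Z : Fin n → Fin p → ℝ)

lemma continuous_akl (k l : Fin n) :
    Continuous fun γ : Matrix (Fin p) (Fin d) ℝ ↦ akl n p d Z γ k l := by
  unfold akl _root_.enorm
  fun_prop

lemma akl_nonneg (γ : Matrix (Fin p) (Fin d) ℝ) (k l : Fin n) : 0 ≤ akl n p d Z γ k l :=
  Real.sqrt_nonneg _

lemma tendsto_Vne {ι : Type*} {l : Filter ι} (B : Fin n → Fin n → ℝ) {ε : ι → ℝ}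
    {γ : ι → Matrix (Fin p) (Fin d) ℝ} {γ₀ : Matrix (Fin p) (Fin d) ℝ}
    (hε : ∀ i, 0 < ε i) (hε₀ : Tendsto ε l (𝓝 0)) (hγ : Tendsto γ l (𝓝 γ₀)) :
    Tendsto (fun i ↦ Vne n p d Z B (ε i) (γ i)) l (𝓝 (Vn n p d Z B γ₀)) := by
  refine .const_mul _ <| tendsto_finsetSum _ fun k _ ↦ tendsto_finsetSum _ fun k' _ ↦ ?_
  have ha : Tendsto (fun i ↦ akl n p d Z (γ i) k k') l (𝓝 (akl n p d Z γ₀ k k')) :=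
    ((continuous_akl Z k k').tendsto γ₀).comp hγ
  simpa using (ha.sub (Real.tendsto_mul_log_one_add_div hε hε₀
    (fun i ↦ akl_nonneg Z (γ i) k k') ha)).mul_const (B k k')

end

lemma isClosed_setOf_transpose_mul_self_eq_one (p d : ℕ) :
    IsClosed {γ : Matrix (Fin p) (Fin d) ℝ | γᵀ * γ = 1} :=
  isClosed_eq (by fun_prop) continuous_const

theorem stmt_16_general (n p d : ℕ) (Z : Fin n → Fin p → ℝ) (B : Fin n → Fin n → ℝ)
    (eps : ℕ → ℝ) (hpos : ∀ m, 0 < eps m)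
    (hlim : Filter.Tendsto eps Filter.atTop (nhds 0))
    (γhat : ℕ → Matrix (Fin p) (Fin d) ℝ)
    (hSt : ∀ m, (γhat m)ᵀ * γhat m = 1)
    (hmax : ∀ m, ∀ γ : Matrix (Fin p) (Fin d) ℝ, γᵀ * γ = 1 →
      Vne n p d Z B (eps m) γ ≤ Vne n p d Z B (eps m) (γhat m))
    (γstar : Matrix (Fin p) (Fin d) ℝ)
    (φ : ℕ → ℕ) (hφ : StrictMono φ)
    (hconv : Filter.Tendsto (fun m => γhat (φ m)) Filter.atTop (nhds γstar)) :
    γstarᵀ * γstar = 1 ∧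
    ∀ γ : Matrix (Fin p) (Fin d) ℝ, γᵀ * γ = 1 →
      Vn n p d Z B γ ≤ Vn n p d Z B γstar := by
  have hε₀ : Tendsto (fun m ↦ eps (φ m)) atTop (𝓝 0) := hlim.comp hφ.tendsto_atTop
  have hε : ∀ m, 0 < eps (φ m) := fun m ↦ hpos (φ m)
  refine ⟨(isClosed_setOf_transpose_mul_self_eq_one p d).mem_of_tendsto hconv
    (.of_forall fun m ↦ hSt (φ m)), fun γ hγ ↦ ?_⟩
  exact le_of_tendsto_of_tendsto' (tendsto_Vne Z B hε hε₀ tendsto_const_nhds)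
    (tendsto_Vne Z B hε hε₀ hconv) fun m ↦ hmax (φ m) γ hγ

/-- If (ε_m) is a decreasing sequence of positive reals tending
to 0 and γ̂_m maximizes V²_{n,ε_m} over the Stiefel manifold, then every
limit point γ* of (γ̂_m) lies in the Stiefel manifold and maximizes V_n²
over it. -/
theorem stmt_16 (n p d : ℕ) (Z : Fin n → Fin p → ℝ) (B : Fin n → Fin n → ℝ)
    (eps : ℕ → ℝ) (hpos : ∀ m, 0 < eps m) (hdec : Antitone eps)
    (hlim : Filter.Tendsto eps Filter.atTop (nhds 0))
    (γhat : ℕ → Matrix (Fin p) (Fin d) ℝ)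
    (hSt : ∀ m, (γhat m)ᵀ * γhat m = 1)
    (hmax : ∀ m, ∀ γ : Matrix (Fin p) (Fin d) ℝ, γᵀ * γ = 1 →
      Vne n p d Z B (eps m) γ ≤ Vne n p d Z B (eps m) (γhat m))
    (γstar : Matrix (Fin p) (Fin d) ℝ)
    (φ : ℕ → ℕ) (hφ : StrictMono φ)
    (hconv : Filter.Tendsto (fun m => γhat (φ m)) Filter.atTop (nhds γstar)) :
    γstarᵀ * γstar = 1 ∧
    ∀ γ : Matrix (Fin p) (Fin d) ℝ, γᵀ * γ = 1 →
      Vn n p d Z B γ ≤ Vn n p d Z B γstar :=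
  stmt_16_general n p d Z B eps hpos hlim γhat hSt hmax γstar φ hφ hconv
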